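/- arXiv:2404.06689 — 3 statements merged into one kernel-verified Lean document; each statement's English description precedes it below -/
import Mathlib

section
/- Let m ≥ 2 and ℓ ∈ ℤ. Let OP_*(ℓ,m) be the chain complex whose degree-k basis consists of ordered partitions (a₁,...,a_k) of ℓ with each aᵢ ∈ {1,...,m-1}, and differential d(a₁,...,a_k) = Σ_{i=1}^{k-1} (-1)^i (a₁,...,aᵢ+aᵢ₊₁,...,a_k), omitting terms with aᵢ+aᵢ₊₁ ≥ m. Then for ℓ ≥ 2, the map φ: OP_{*-2}(ℓ-m,m) → OP_*(ℓ,m) defined by φ(a₁,...,a_k) = (1, m-1, a₁,...,a_k) is a chain map. -/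
open scoped Classical

/-- Basis of `OP_k(ℓ,m)`: ordered partitions of `ℓ` into `k` parts, all in `{1,...,m-1}`. -/
def OPb (ℓ : ℤ) (m k : ℕ) : Type :=
  {l : List ℕ // l.length = k ∧ (l.sum : ℤ) = ℓ ∧ ∀ x ∈ l, 1 ≤ x ∧ x < m}

/-- The degree-`k` chain module of the complex of ordered partitions with upper bound. -/
abbrev OPMod (R : Type) [CommRing R] (ℓ : ℤ) (m k : ℕ) := OPb ℓ m k →₀ R

/-- The alternating sum of adjacent merges of a list, dropping merged entries `≥ m`. -/
noncomputable def dList (R : Type) [CommRing R] (m : ℕ) : List ℕ → (List ℕ →₀ R)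
  | [] => 0
  | [_] => 0
  | a :: b :: t =>
      (if a + b < m then -Finsupp.single ((a + b) :: t) (1 : R) else 0)
        - Finsupp.mapDomain (List.cons a) (dList R m (b :: t))

/-- Embedding of `OP_k(ℓ,m)` into the free module on all lists. -/
noncomputable def eL (R : Type) [CommRing R] (ℓ : ℤ) (m k : ℕ) :
    OPMod R ℓ m k →ₗ[R] (List ℕ →₀ R) :=
  Finsupp.lmapDomain R R Subtype.val

noncomputable def DL (R : Type) [CommRing R] (m : ℕ) : (List ℕ →₀ R) →ₗ[R] (List ℕ →₀ R) :=
  Finsupp.lsum R fun l => LinearMap.toSpanSingleton R _ (dList R m l)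

noncomputable def rL (R : Type) [CommRing R] (ℓ : ℤ) (m k : ℕ) :
    (List ℕ →₀ R) →ₗ[R] OPMod R ℓ m k :=
  Finsupp.lcomapDomain Subtype.val Subtype.val_injective

/-- The differential of the complex `OP_*(ℓ,m)`: merge adjacent entries with alternating
signs `(-1)^i`, dropping any term in which the merged entry is `≥ m`. -/
noncomputable def dOP (R : Type) [CommRing R] (ℓ : ℤ) (m k : ℕ) :
    OPMod R ℓ m (k + 1) →ₗ[R] OPMod R ℓ m k :=
  (rL R ℓ m k) ∘ₗ (DL R m) ∘ₗ (eL R ℓ m (k + 1))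

/-- The outgoing differential from degree `k` (zero in degree `0`). -/
noncomputable def dOPOut (R : Type) [CommRing R] (ℓ : ℤ) (m : ℕ) :
    (k : ℕ) → OPMod R ℓ m k →ₗ[R] OPMod R ℓ m (k - 1)
  | 0 => 0
  | (k + 1) => dOP R ℓ m k

/-- Homology of the complex `OP_*(ℓ,m)` in degree `k`. -/
noncomputable abbrev OPH (R : Type) [CommRing R] (ℓ : ℤ) (m k : ℕ) :=
  letI : HasQuotient (LinearMap.ker (dOPOut R ℓ m k))
      (Submodule R (LinearMap.ker (dOPOut R ℓ m k))) :=
      Submodule.hasQuotient (R := R) (M := LinearMap.ker (dOPOut R ℓ m k))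
  LinearMap.ker (dOPOut R ℓ m k) ⧸
    (LinearMap.range (dOPOut R ℓ m (k + 1))).comap (LinearMap.ker (dOPOut R ℓ m k)).subtype

/-- The chain map `φ : OP_{*-2}(ℓ-m,m) → OP_*(ℓ,m)`, prepending `(1, m-1)`. -/
noncomputable def phiOP (R : Type) [CommRing R] (ℓ : ℤ) (m : ℕ) (hm : 2 ≤ m) (k : ℕ) :
    OPMod R (ℓ - m) m k →ₗ[R] OPMod R ℓ m (k + 2) :=
  Finsupp.lmapDomain R R fun b =>
    ⟨1 :: (m - 1) :: b.1, by
      obtain ⟨h1, h2, h3⟩ := b.2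
      refine ⟨by simpa using h1, ?_, ?_⟩
      · simp only [List.sum_cons]
        omega
      · intro y hy
        simp only [List.mem_cons] at hy
        rcases hy with rfl | rfl | hy
        · omega
        · omega
        · exact h3 y hy⟩

/-- The alternating list `(1, m-1, 1, m-1, ...)` with `2i` entries. -/
def altL (m : ℕ) : ℕ → List ℕ
  | 0 => []
  | i + 1 => 1 :: (m - 1) :: altL m i

/-- The alternating list `(m-1, 1, m-1, 1, ...)` with `2i` entries. -/
def altL' (m : ℕ) : ℕ → List ℕ
  | 0 => []
  | i + 1 => (m - 1) :: 1 :: altL' m i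

/-!
Prepending `(1, m-1)` commutes with the differential: the two new merges `1 + (m-1) = m` and
`(m-1) + a₁ ≥ m` both reach the bound and are dropped, while every merge inside `(a₁,…,a_k)` is
shifted by two positions, which leaves its sign `(-1)^i` unchanged.
-/

theorem Finsupp.comapDomain_val_mapDomain {α β M : Type*} [AddCommMonoid M] {P : α → Prop}
    {Q : β → Prop} {g : α → β} (hg : Function.Injective g) (F : Subtype P → Subtype Q)
    (hF : ∀ b, (F b).1 = g b.1) (hQP : ∀ a, Q (g a) → P a) (v : α →₀ M) :
    comapDomain Subtype.val (mapDomain g v) Subtype.val_injective.injOn =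
      mapDomain F (comapDomain Subtype.val v Subtype.val_injective.injOn) := by
  have hFinj : Function.Injective F := fun b b' h =>
    Subtype.ext (hg (by rw [← hF, ← hF, h]))
  ext q
  by_cases hq : q.1 ∈ Set.range g
  · obtain ⟨a, ha⟩ := hq
    have hFa : F ⟨a, hQP a (ha ▸ q.2)⟩ = q := Subtype.ext (by rw [hF, ha])
    rw [← hFa, comapDomain_apply, hF, mapDomain_apply hg, mapDomain_apply hFinj,
      comapDomain_apply]
  · rw [comapDomain_apply, mapDomain_of_notMem_range _ _ hq, mapDomain_of_notMem_range]
    rintro ⟨b, rfl⟩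
    exact hq ⟨b.1, (hF b).symm⟩

theorem dList_cons_cons_cons_of_le (R : Type) [CommRing R] {m x y a : ℕ} (hxy : m ≤ x + y)
    (hya : m ≤ y + a) (t : List ℕ) :
    dList R m (x :: y :: a :: t) =
      (dList R m (a :: t)).mapDomain fun l => x :: y :: l := by
  rw [dList, dList, if_neg (by omega), if_neg (by omega), Finsupp.mapDomain_sub,
    Finsupp.mapDomain_zero, sub_sub_cancel, ← Finsupp.mapDomain_comp]
  rfl

theorem dOP_single (R : Type) [CommRing R] (ℓ : ℤ) (m k : ℕ) (b : OPb ℓ m (k + 1)) (r : R) :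
    dOP R ℓ m k (Finsupp.single b r) = r • rL R ℓ m k (dList R m b.1) := by
  have heL : eL R ℓ m (k + 1) (Finsupp.single b r) = Finsupp.single b.1 r :=
    Finsupp.mapDomain_single
  rw [dOP, LinearMap.comp_apply, LinearMap.comp_apply, heL, DL, Finsupp.lsum_single,
    LinearMap.toSpanSingleton_apply, map_smul]

theorem rL_mapDomain_cons_cons (R : Type) [CommRing R] (ℓ : ℤ) (m : ℕ) (hm : 2 ≤ m) (k : ℕ)
    (v : List ℕ →₀ R) :
    rL R ℓ m (k + 2) (v.mapDomain fun l => 1 :: (m - 1) :: l) =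
      phiOP R ℓ m hm k (rL R (ℓ - m) m k v) := by
  unfold rL phiOP
  refine Finsupp.comapDomain_val_mapDomain (g := fun l => 1 :: (m - 1) :: l) (v := v)
    (fun _ _ h => by simpa using h) _ (fun _ => rfl) (fun l ⟨hlen, hsum, hmem⟩ => ⟨by simpa using hlen, ?_, fun x hx => hmem x (by simp [hx])⟩)
  simp only [List.sum_cons, Nat.cast_add, Nat.cast_sub (by omega : 1 ≤ m), Nat.cast_one] at hsum
  omega

theorem phiOP_chainMap_general (R : Type) [CommRing R] (ℓ : ℤ) (m : ℕ) (hm : 2 ≤ m)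
    (k : ℕ) (c : OPMod R (ℓ - m) m (k + 1)) :
    dOP R ℓ m (k + 2) (phiOP R ℓ m hm (k + 1) c) =
      phiOP R ℓ m hm k (dOP R (ℓ - m) m k c) := by
  suffices h : dOP R ℓ m (k + 2) ∘ₗ phiOP R ℓ m hm (k + 1) =
      phiOP R ℓ m hm k ∘ₗ dOP R (ℓ - m) m k from LinearMap.congr_fun h c
  refine Finsupp.lhom_ext fun b r => ?_
  obtain ⟨a, t, hb⟩ := List.exists_cons_of_length_eq_add_one b.2.1
  have ha : 1 ≤ a := (b.2.2.2 a (hb ▸ List.mem_cons_self)).1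
  calc dOP R ℓ m (k + 2) (phiOP R ℓ m hm (k + 1) (Finsupp.single b r))
      = r • rL R ℓ m (k + 2) (dList R m (1 :: (m - 1) :: b.1)) :=
        (congrArg _ Finsupp.mapDomain_single).trans (dOP_single ..)
    _ = r • rL R ℓ m (k + 2) ((dList R m b.1).mapDomain fun l => 1 :: (m - 1) :: l) := by
        rw [hb, dList_cons_cons_cons_of_le R (by omega) (by omega)]
    _ = phiOP R ℓ m hm k (dOP R (ℓ - m) m k (Finsupp.single b r)) := by
        rw [rL_mapDomain_cons_cons R ℓ m hm, dOP_single, map_smul]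

/-- for `m ≥ 2` and `ℓ ≥ 2`, the map
`φ(a₁,...,a_k) = (1, m-1, a₁, ..., a_k)` is a chain map
`OP_{*-2}(ℓ-m, m) → OP_*(ℓ, m)`. -/
theorem phiOP_chainMap (R : Type) [CommRing R] (ℓ : ℤ) (m : ℕ) (hm : 2 ≤ m) (hℓ : 2 ≤ ℓ)
    (k : ℕ) (c : OPMod R (ℓ - m) m (k + 1)) :
    dOP R ℓ m (k + 2) (phiOP R ℓ m hm (k + 1) c) =
      phiOP R ℓ m hm k (dOP R (ℓ - m) m k c) :=
  phiOP_chainMap_general R ℓ m hm k c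
end

section
/- For m ≥ 2 and k, ℓ ∈ ℤ with k ≥ 0, the homology H_k(OP(ℓ,m)) vanishes unless (k,ℓ) = (2i, mi) or (k,ℓ) = (2i+1, mi+1) for some i ≥ 0, in which cases it is a free R-module of rank 1, generated respectively by the class of (1,m-1,...,1,m-1) (with 2i entries) and of (1,m-1,...,1,m-1,1) (with 2i+1 entries). -/
open scoped Classical

/-!
Splitting a leading part `a ≥ 2` of a list into `(1, a - 1)` defines a map `h` on the free module
on all lists with `x + dh x + hd x` a combination of lists starting with `(1, m - 1)` whenever `x`
is a combination of ordered partitions of `ℓ ≥ 2` (a first part `a ≥ 2` is undone by the merge in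
`dh`; a first part `1` by the merge in `hd`, unless the second part is `m - 1`). Prepending
`(1, m - 1)` is a chain map `OP_{*-2}(ℓ - m, m) → OP_*(ℓ, m)` onto those lists, and `h` kills its
image, so for `ℓ ≥ 2` it is an isomorphism on homology, and `H_0`, `H_1` of `OP(ℓ, m)` vanish. This
reduces everything to `ℓ ≤ 1`, where the complex is zero or a single copy of `R`.
-/

open Finsupp

lemma map_mem_of_forall_single {R α M : Type} [CommRing R] [AddCommGroup M] [Module R M] {s : Set α}
    {T : (α →₀ R) →ₗ[R] M} {N : Submodule R M} (h : ∀ l ∈ s, T (single l 1) ∈ N)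
    {y : α →₀ R} (hy : y ∈ supported R R s) : T y ∈ N := by
  suffices hs : supported R R s ≤ N.comap T from hs hy
  rw [supported_eq_span_single, Submodule.span_le]
  rintro _ ⟨l, hl, rfl⟩
  exact h l hl

lemma LinearMap.bijective_toSpanSingleton_iff {R M : Type} [CommRing R] [AddCommGroup M]
    [Module R M] {x : M} :
    Function.Bijective (LinearMap.toSpanSingleton R M x) ↔
      (∀ y : M, ∃ r : R, y = r • x) ∧ ∀ r : R, r • x = 0 → r = 0 := by
  simp only [Function.Bijective, injective_iff_map_eq_zero, LinearMap.toSpanSingleton_apply,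
    Function.Surjective, eq_comm (b := _ • x)]
  exact and_comm

section ListModule

variable {R : Type} [CommRing R] {m : ℕ}

noncomputable def consL (R : Type) [CommRing R] (a : ℕ) : (List ℕ →₀ R) →ₗ[R] (List ℕ →₀ R) :=
  lmapDomain R R (List.cons a)

noncomputable def mergeHead (R : Type) [CommRing R] (m a : ℕ) : List ℕ → (List ℕ →₀ R)
  | [] => 0
  | c :: t => if a + c < m then single ((a + c) :: t) 1 else 0

noncomputable def ML (R : Type) [CommRing R] (m a : ℕ) : (List ℕ →₀ R) →ₗ[R] (List ℕ →₀ R) :=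
  linearCombination R (mergeHead R m a)

lemma consL_single (a : ℕ) (l : List ℕ) (r : R) : consL R a (single l r) = single (a :: l) r :=
  mapDomain_single

lemma DL_single (l : List ℕ) (r : R) : DL R m (single l r) = r • dList R m l := by
  simp [DL]

lemma ML_single (a : ℕ) (l : List ℕ) (r : R) : ML R m a (single l r) = r • mergeHead R m a l :=
  linearCombination_single _ _ _

lemma dList_cons (a : ℕ) (t : List ℕ) :
    dList R m (a :: t) = -mergeHead R m a t - consL R a (dList R m t) := by
  cases t with
  | nil => simp [dList, mergeHead, consL]
  | cons c t =>
    simp only [dList, mergeHead, consL, lmapDomain_apply]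
    split_ifs <;> simp

lemma DL_consL (a : ℕ) (y : List ℕ →₀ R) :
    DL R m (consL R a y) = -ML R m a y - consL R a (DL R m y) := by
  suffices h : DL R m ∘ₗ consL R a = -ML R m a - consL R a ∘ₗ DL R m from
    LinearMap.congr_fun h y
  ext l : 2
  simp [consL_single, DL_single, ML_single, dList_cons]

lemma ML_consL (a b : ℕ) (y : List ℕ →₀ R) :
    ML R m a (consL R b y) = if a + b < m then consL R (a + b) y else 0 := by
  suffices h : ML R m a ∘ₗ consL R b = if a + b < m then consL R (a + b) else 0 from
    (LinearMap.congr_fun h y).trans (by split_ifs <;> rfl)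
  ext l : 2
  split_ifs <;> simp [consL_single, ML_single, mergeHead, *]

lemma ML_ML (a b : ℕ) (y : List ℕ →₀ R) :
    ML R m a (ML R m b y) = if a + b < m then ML R m (a + b) y else 0 := by
  suffices h : ML R m a ∘ₗ ML R m b = if a + b < m then ML R m (a + b) else 0 from
    (LinearMap.congr_fun h y).trans (by split_ifs <;> rfl)
  ext l : 2
  rcases l with _ | ⟨c, t⟩
  · split_ifs <;> simp [ML_single, mergeHead]
  · simp only [LinearMap.comp_apply, lsingle_apply, ML_single, mergeHead, one_smul]
    split_ifs <;> simp_all [ML_single, mergeHead, add_assoc] <;> omega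

lemma DL_ML (a : ℕ) (y : List ℕ →₀ R) : DL R m (ML R m a y) = ML R m a (DL R m y) := by
  suffices h : DL R m ∘ₗ ML R m a = ML R m a ∘ₗ DL R m from LinearMap.congr_fun h y
  ext l : 2
  rcases l with _ | ⟨c, t⟩
  · simp [ML_single, DL_single, mergeHead, dList]
  · simp only [LinearMap.comp_apply, lsingle_apply, ML_single, one_smul, mergeHead]
    rw [← consL_single (a := c), DL_consL, map_sub, map_neg, ML_ML, ML_consL]
    split_ifs with h
    · rw [← consL_single, DL_consL, ML_single, one_smul]
    · simp

lemma DL_DL (y : List ℕ →₀ R) : DL R m (DL R m y) = 0 := by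
  suffices h : DL R m ∘ₗ DL R m = 0 from LinearMap.congr_fun h y
  ext l : 2
  simp only [LinearMap.comp_apply, lsingle_apply, LinearMap.zero_apply]
  induction l with
  | nil => simp [DL_single, dList]
  | cons a t ih =>
    rw [← consL_single, DL_consL, map_sub, map_neg, DL_ML, DL_consL, ih]
    simp

noncomputable def splitHead (R : Type) [CommRing R] : List ℕ → (List ℕ →₀ R)
  | [] => 0
  | a :: t => if a ≤ 1 then 0 else single (1 :: (a - 1) :: t) 1

noncomputable def HL (R : Type) [CommRing R] : (List ℕ →₀ R) →ₗ[R] (List ℕ →₀ R) :=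
  linearCombination R (splitHead R)

lemma HL_single (l : List ℕ) (r : R) : HL R (single l r) = r • splitHead R l :=
  linearCombination_single _ _ _

lemma HL_consL_one (y : List ℕ →₀ R) : HL R (consL R 1 y) = 0 := by
  suffices h : HL R ∘ₗ consL R 1 = 0 from LinearMap.congr_fun h y
  ext l : 2
  simp [consL_single, HL_single, splitHead]

lemma HL_consL {a : ℕ} (ha : 2 ≤ a) (y : List ℕ →₀ R) :
    HL R (consL R a y) = consL R 1 (consL R (a - 1) y) := by
  suffices h : HL R ∘ₗ consL R a = consL R 1 ∘ₗ consL R (a - 1) from LinearMap.congr_fun h y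
  ext l : 2
  simp [consL_single, HL_single, splitHead, show ¬ a ≤ 1 by omega]

noncomputable def prependL (R : Type) [CommRing R] (m : ℕ) :
    (List ℕ →₀ R) →ₗ[R] (List ℕ →₀ R) :=
  consL R 1 ∘ₗ consL R (m - 1)

lemma prependL_injective : Function.Injective (prependL R m) :=
  (mapDomain_injective List.cons_injective).comp (mapDomain_injective List.cons_injective)

lemma prependL_single (l : List ℕ) (r : R) :
    prependL R m (single l r) = single (1 :: (m - 1) :: l) r := by
  simp [prependL, consL_single]

lemma HL_prependL (y : List ℕ →₀ R) : HL R (prependL R m y) = 0 :=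
  HL_consL_one _

lemma DL_prependL (y : List ℕ →₀ R) :
    DL R m (prependL R m y) = consL R 1 (ML R m (m - 1) y) + prependL R m (DL R m y) := by
  simp only [prependL, LinearMap.comp_apply, DL_consL, ML_consL,
    if_neg (show ¬ 1 + (m - 1) < m by omega), map_sub, map_neg]
  abel

lemma homotopy_consL {a : ℕ} (ha : 2 ≤ a) (ham : a < m) (z : List ℕ →₀ R) :
    consL R a z + DL R m (HL R (consL R a z)) + HL R (DL R m (consL R a z))
      = consL R 1 (ML R m (a - 1) z) - HL R (ML R m a z) := by
  have hsplit : 1 + (a - 1) = a := by omega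
  simp only [HL_consL ha, DL_consL, ML_consL, hsplit, if_pos ham, map_sub, map_neg]
  abel

lemma homotopy_single_mem_range {l : List ℕ} (hl : ∀ x ∈ l, 1 ≤ x ∧ x < m) (h2 : 2 ≤ l.sum) :
    single l (1 : R) + DL R m (HL R (single l 1)) + HL R (DL R m (single l 1))
      ∈ LinearMap.range (prependL R m) := by
  rcases l with _ | ⟨a, t⟩
  · simp at h2
  obtain ⟨ha1, ham⟩ := hl a (by simp)
  rw [← consL_single]
  rcases (by omega : a = 1 ∨ 2 ≤ a) with rfl | ha
  · rcases t with _ | ⟨c, t⟩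
    · simp at h2
    obtain ⟨hc1, hcm⟩ := hl c (by simp)
    rw [HL_consL_one, map_zero, add_zero, DL_consL, map_sub, map_neg, HL_consL_one, sub_zero,
      ML_single, one_smul, mergeHead, consL_single]
    split_ifs with h
    · rw [HL_single, one_smul, splitHead, if_neg (by omega), Nat.add_sub_cancel_left]
      simp
    · obtain rfl : c = m - 1 := by omega
      exact ⟨single t 1, by simp [prependL_single]⟩
  · rw [homotopy_consL ha ham]
    rcases t with _ | ⟨c, t⟩
    · simp [ML_single, mergeHead]
    simp only [ML_single, one_smul, mergeHead]
    by_cases h : a + c < m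
    · rw [if_pos (by omega), if_pos h, HL_single, one_smul, splitHead, if_neg (by omega),
        consL_single, Nat.sub_add_comm (by omega), sub_self]
      exact zero_mem _
    · by_cases h' : a - 1 + c < m
      · rw [if_pos h', if_neg h, map_zero, sub_zero, consL_single,
          show a - 1 + c = m - 1 by omega]
        exact ⟨single t 1, prependL_single t 1⟩
      · simp [h, h']

end ListModule

-- An `abbrev`, so that `⟨l, h⟩ : OPb ℓ m k` elaborates for `h : l ∈ OPSet ℓ m k`.
abbrev OPSet (ℓ : ℤ) (m k : ℕ) : Set (List ℕ) :=
  {l | l.length = k ∧ (l.sum : ℤ) = ℓ ∧ ∀ x ∈ l, 1 ≤ x ∧ x < m}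

section OPSet

variable {ℓ : ℤ} {m k : ℕ}

lemma nil_mem_OPSet_iff : [] ∈ OPSet ℓ m k ↔ k = 0 ∧ ℓ = 0 := by
  simp [OPSet, eq_comm]

lemma cons_mem_OPSet_iff {a : ℕ} {t : List ℕ} :
    a :: t ∈ OPSet ℓ m k ↔ (1 ≤ a ∧ a < m) ∧ ∃ j, k = j + 1 ∧ t ∈ OPSet (ℓ - a) m j := by
  simp only [OPSet, Set.mem_ofPred_eq, List.length_cons, List.sum_cons, List.mem_cons,
    forall_eq_or_imp]
  constructor
  · rintro ⟨rfl, hs, ha, ht⟩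
    exact ⟨ha, _, rfl, rfl, by rw [Nat.cast_add] at hs; omega, ht⟩
  · rintro ⟨ha, j, rfl, rfl, hs, ht⟩
    exact ⟨rfl, by rw [Nat.cast_add]; omega, ha, ht⟩

lemma cons_cons_mem_OPSet_iff (hm : 2 ≤ m) {t : List ℕ} :
    1 :: (m - 1) :: t ∈ OPSet ℓ m (k + 2) ↔ t ∈ OPSet (ℓ - m) m k := by
  have hs : ℓ - (1 : ℕ) - (m - 1 : ℕ) = ℓ - m := by
    push_cast [Nat.cast_sub (one_le_two.trans hm)]; ring
  constructor
  · intro h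
    obtain ⟨-, j, hj, h'⟩ := cons_mem_OPSet_iff.mp h
    obtain ⟨-, i, hi, ht⟩ := cons_mem_OPSet_iff.mp h'
    rwa [show i = k by omega, hs] at ht
  · intro ht
    refine cons_mem_OPSet_iff.mpr ⟨⟨le_rfl, by omega⟩, k + 1, rfl,
      cons_mem_OPSet_iff.mpr ⟨⟨by omega, by omega⟩, k, rfl, by rwa [hs]⟩⟩

lemma length_le_of_mem_OPSet {l : List ℕ} (hl : l ∈ OPSet ℓ m k) : (k : ℤ) ≤ ℓ := by
  induction l generalizing ℓ k with
  | nil => obtain ⟨rfl, rfl⟩ := nil_mem_OPSet_iff.mp hl; rfl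
  | cons a t ih =>
    obtain ⟨⟨ha, -⟩, j, rfl, ht⟩ := cons_mem_OPSet_iff.mp hl
    have := ih ht
    push_cast
    omega

end OPSet

section Supported

variable {R : Type} [CommRing R] {ℓ : ℤ} {m k : ℕ}

lemma consL_mem_supported {a : ℕ} (ha : 1 ≤ a ∧ a < m) {y : List ℕ →₀ R}
    (hy : y ∈ supported R R (OPSet ℓ m k)) :
    consL R a y ∈ supported R R (OPSet (ℓ + a) m (k + 1)) := by
  refine map_mem_of_forall_single (fun l hl => ?_) hy
  rw [consL_single]
  exact single_mem_supported R _ (cons_mem_OPSet_iff.mpr ⟨ha, k, rfl, by simpa using hl⟩)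

lemma mergeHead_mem_supported {a : ℕ} {t : List ℕ} (h : a :: t ∈ OPSet ℓ m (k + 1)) :
    mergeHead R m a t ∈ supported R R (OPSet ℓ m k) := by
  rcases t with _ | ⟨c, t⟩
  · exact zero_mem _
  obtain ⟨ha, j, hj, hct⟩ := cons_mem_OPSet_iff.mp h
  obtain ⟨hc, i, rfl, ht⟩ := cons_mem_OPSet_iff.mp hct
  rw [mergeHead]
  split_ifs with hac
  · refine single_mem_supported R _ (cons_mem_OPSet_iff.mpr ⟨⟨by omega, hac⟩, i, by omega, ?_⟩)
    convert ht using 2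
    push_cast
    ring
  · exact zero_mem _

lemma dList_mem_supported {l : List ℕ} (hl : l ∈ OPSet ℓ m (k + 1)) :
    dList R m l ∈ supported R R (OPSet ℓ m k) := by
  induction l generalizing ℓ k with
  | nil => simp at hl
  | cons a t ih =>
    obtain ⟨ha, j, hj, ht⟩ := cons_mem_OPSet_iff.mp hl
    rw [show j = k by omega] at ht
    rw [dList_cons]
    refine sub_mem (neg_mem (mergeHead_mem_supported hl)) ?_
    rcases k with _ | k
    · obtain rfl : t = [] := List.eq_nil_of_length_eq_zero ht.1
      simp [dList]
    · simpa using consL_mem_supported ha (ih ht)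

lemma DL_mem_supported {y : List ℕ →₀ R} (hy : y ∈ supported R R (OPSet ℓ m (k + 1))) :
    DL R m y ∈ supported R R (OPSet ℓ m k) :=
  map_mem_of_forall_single
    (fun _ hl => by rw [DL_single, one_smul]; exact dList_mem_supported hl) hy

lemma HL_mem_supported {y : List ℕ →₀ R} (hy : y ∈ supported R R (OPSet ℓ m k)) :
    HL R y ∈ supported R R (OPSet ℓ m (k + 1)) := by
  refine map_mem_of_forall_single (fun l hl => ?_) hy
  rw [HL_single, one_smul]
  rcases l with _ | ⟨a, t⟩
  · exact zero_mem _
  obtain ⟨⟨ha1, ham⟩, j, rfl, ht⟩ := cons_mem_OPSet_iff.mp hl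
  rw [splitHead]
  split_ifs with ha
  · exact zero_mem _
  · refine single_mem_supported R _ (cons_mem_OPSet_iff.mpr ⟨⟨le_rfl, by omega⟩, j + 1, rfl,
      cons_mem_OPSet_iff.mpr ⟨⟨by omega, by omega⟩, j, rfl, ?_⟩⟩)
    convert ht using 2
    push_cast [Nat.cast_sub (show 1 ≤ a by omega)]
    ring

lemma ML_pred_eq_zero {y : List ℕ →₀ R} (hy : y ∈ supported R R {l | ∀ x ∈ l, 1 ≤ x}) :
    ML R m (m - 1) y = 0 := by
  refine map_mem_of_forall_single (N := ⊥) (fun l hl => ?_) hy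
  rcases l with _ | ⟨c, t⟩
  · simp [ML_single, mergeHead]
  · simp [ML_single, mergeHead, show ¬ m - 1 + c < m by have := hl c (by simp); omega]

end Supported

section OPComplex

variable {R : Type} [CommRing R] {ℓ : ℤ} {m k : ℕ}

lemma eL_single (b : OPb ℓ m k) (r : R) : eL R ℓ m k (single b r) = single b.1 r :=
  mapDomain_single

lemma eL_injective : Function.Injective (eL R ℓ m k) :=
  mapDomain_injective Subtype.val_injective

lemma eL_mem_supported (x : OPMod R ℓ m k) : eL R ℓ m k x ∈ supported R R (OPSet ℓ m k) := by
  refine map_mem_of_forall_single (s := Set.univ) (fun b _ => ?_) (by simp [supported_univ])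
  rw [eL_single]
  exact single_mem_supported R _ b.2

lemma rL_eL (x : OPMod R ℓ m k) : rL R ℓ m k (eL R ℓ m k x) = x :=
  comapDomain_mapDomain _ Subtype.val_injective x

lemma eL_rL {y : List ℕ →₀ R} (hy : y ∈ supported R R (OPSet ℓ m k)) :
    eL R ℓ m k (rL R ℓ m k y) = y :=
  mapDomain_comapDomain _ Subtype.val_injective y
    (((mem_supported R y).mp hy).trans fun l hl => ⟨⟨l, hl⟩, rfl⟩)

lemma rL_single_of_mem {l : List ℕ} (h : l ∈ OPSet ℓ m k) (r : R) :
    rL R ℓ m k (single l r) = single (α := OPb ℓ m k) ⟨l, h⟩ r :=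
  comapDomain_single _ (⟨l, h⟩ : OPb ℓ m k) r _

lemma rL_single_of_notMem {l : List ℕ} (h : l ∉ OPSet ℓ m k) (r : R) :
    rL R ℓ m k (single l r) = 0 := by
  ext b
  exact single_eq_of_ne (fun hb => h (hb ▸ b.2))

lemma rL_prependL_of_le_one {j : ℕ} (hj : j ≤ 1) (y : List ℕ →₀ R) :
    rL R ℓ m j (prependL R m y) = 0 := by
  suffices h : rL R ℓ m j ∘ₗ prependL R m = 0 from LinearMap.congr_fun h y
  ext t : 2
  simp only [LinearMap.comp_apply, lsingle_apply, prependL_single, LinearMap.zero_apply]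
  refine rL_single_of_notMem (fun h => ?_) 1
  have := h.1
  simp only [List.length_cons] at this
  omega

lemma eL_dOP (x : OPMod R ℓ m (k + 1)) : eL R ℓ m k (dOP R ℓ m k x) = DL R m (eL R ℓ m (k + 1) x) :=
  eL_rL (DL_mem_supported (eL_mem_supported x))

lemma dOP_dOP (x : OPMod R ℓ m (k + 2)) : dOP R ℓ m k (dOP R ℓ m (k + 1) x) = 0 :=
  eL_injective (by rw [eL_dOP, eL_dOP, DL_DL, map_zero])

lemma ML_pred_eL (x : OPMod R ℓ m k) : ML R m (m - 1) (eL R ℓ m k x) = 0 :=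
  ML_pred_eq_zero (supported_mono (fun _ hl x hx => (hl.2.2 x hx).1) (eL_mem_supported x))

noncomputable def hOP (R : Type) [CommRing R] (ℓ : ℤ) (m k : ℕ) :
    OPMod R ℓ m k →ₗ[R] OPMod R ℓ m (k + 1) :=
  rL R ℓ m (k + 1) ∘ₗ HL R ∘ₗ eL R ℓ m k

lemma eL_hOP (x : OPMod R ℓ m k) : eL R ℓ m (k + 1) (hOP R ℓ m k x) = HL R (eL R ℓ m k x) :=
  eL_rL (HL_mem_supported (eL_mem_supported x))

lemma exists_homotopy_eq_rL_prependL (hℓ : 2 ≤ ℓ) (x : OPMod R ℓ m (k + 1)) :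
    ∃ z, x + dOP R ℓ m (k + 1) (hOP R ℓ m (k + 1) x) + hOP R ℓ m k (dOP R ℓ m k x)
      = rL R ℓ m (k + 1) (prependL R m z) := by
  obtain ⟨z, hz⟩ := map_mem_of_forall_single
    (T := LinearMap.id + DL R m ∘ₗ HL R + HL R ∘ₗ DL R m) (N := LinearMap.range (prependL R m))
    (fun l hl => homotopy_single_mem_range hl.2.2 (by have := hl.2.1; omega))
    (eL_mem_supported x)
  refine ⟨z, ?_⟩
  rw [hz, LinearMap.add_apply, LinearMap.add_apply, LinearMap.id_apply, LinearMap.comp_apply,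
    LinearMap.comp_apply, ← eL_dOP, ← eL_hOP, ← eL_hOP, ← eL_dOP, ← map_add, ← map_add, rL_eL]

end OPComplex

section Phi

variable {R : Type} [CommRing R] {ℓ : ℤ} {m : ℕ} (hm : 2 ≤ m) {k : ℕ}
include hm

lemma phiOP_single (b : OPb (ℓ - m) m k) (r : R) :
    phiOP R ℓ m hm k (single b r)
      = single (α := OPb ℓ m (k + 2))
        ⟨1 :: (m - 1) :: b.1, (cons_cons_mem_OPSet_iff hm).mpr b.2⟩ r :=
  mapDomain_single

lemma eL_phiOP (x : OPMod R (ℓ - m) m k) :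
    eL R ℓ m (k + 2) (phiOP R ℓ m hm k x) = prependL R m (eL R (ℓ - m) m k x) := by
  suffices h : eL R ℓ m (k + 2) ∘ₗ phiOP R ℓ m hm k = prependL R m ∘ₗ eL R (ℓ - m) m k from
    LinearMap.congr_fun h x
  ext b : 2
  simp only [LinearMap.comp_apply, lsingle_apply, phiOP_single, eL_single, prependL_single]
  exact eL_single _ _

lemma phiOP_injective : Function.Injective (phiOP R ℓ m hm k) := by
  intro x y hxy
  have h := congrArg (eL R ℓ m (k + 2)) hxy
  rw [eL_phiOP, eL_phiOP] at h
  exact eL_injective (prependL_injective h)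

lemma rL_prependL (y : List ℕ →₀ R) :
    rL R ℓ m (k + 2) (prependL R m y) = phiOP R ℓ m hm k (rL R (ℓ - m) m k y) := by
  suffices h : rL R ℓ m (k + 2) ∘ₗ prependL R m = phiOP R ℓ m hm k ∘ₗ rL R (ℓ - m) m k from
    LinearMap.congr_fun h y
  ext t : 2
  simp only [LinearMap.comp_apply, lsingle_apply, prependL_single]
  by_cases ht : t ∈ OPSet (ℓ - m) m k
  · rw [rL_single_of_mem ((cons_cons_mem_OPSet_iff hm).mpr ht) (1 : R),
      rL_single_of_mem ht (1 : R)]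
    exact (phiOP_single hm ⟨t, ht⟩ (1 : R)).symm
  · rw [rL_single_of_notMem (mt (cons_cons_mem_OPSet_iff hm).mp ht) (1 : R),
      rL_single_of_notMem ht (1 : R), map_zero]

lemma dOP_phiOP (x : OPMod R (ℓ - m) m (k + 1)) :
    dOP R ℓ m (k + 2) (phiOP R ℓ m hm (k + 1) x) = phiOP R ℓ m hm k (dOP R (ℓ - m) m k x) := by
  refine eL_injective ?_
  rw [eL_dOP, eL_phiOP, DL_prependL, eL_phiOP, eL_dOP, ML_pred_eL, map_zero, zero_add]

lemma dOP_phiOP_zero (x : OPMod R (ℓ - m) m 0) : dOP R ℓ m 1 (phiOP R ℓ m hm 0 x) = 0 := by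
  refine eL_injective ?_
  have hD : DL R m (eL R (ℓ - m) m 0 x) = 0 :=
    map_mem_of_forall_single (N := ⊥) (fun l hl => by
      rw [List.eq_nil_of_length_eq_zero hl.1, DL_single]; simp [dList]) (eL_mem_supported x)
  rw [eL_dOP, eL_phiOP, DL_prependL, ML_pred_eL, hD, map_zero, map_zero, add_zero, map_zero]

lemma hOP_phiOP (x : OPMod R (ℓ - m) m k) : hOP R ℓ m (k + 2) (phiOP R ℓ m hm k x) = 0 :=
  eL_injective (by rw [eL_hOP, eL_phiOP, HL_prependL, map_zero])

end Phi

section Homology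

variable {R : Type} [CommRing R] {ℓ : ℤ} {m : ℕ} (hm : 2 ≤ m) {K : ℕ}
include hm

lemma phiOP_mem_ker {x : OPMod R (ℓ - m) m K} (hx : x ∈ LinearMap.ker (dOPOut R (ℓ - m) m K)) :
    phiOP R ℓ m hm K x ∈ LinearMap.ker (dOPOut R ℓ m (K + 2)) := by
  rw [LinearMap.mem_ker] at hx ⊢
  cases K with
  | zero => exact dOP_phiOP_zero hm x
  | succ J =>
    change dOP R ℓ m (J + 2) (phiOP R ℓ m hm (J + 1) x) = 0
    rw [dOP_phiOP, show dOP R (ℓ - m) m J x = 0 from hx, map_zero]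

lemma phiOP_mem_range {x : OPMod R (ℓ - m) m K}
    (hx : x ∈ LinearMap.range (dOPOut R (ℓ - m) m (K + 1))) :
    phiOP R ℓ m hm K x ∈ LinearMap.range (dOPOut R ℓ m (K + 3)) := by
  obtain ⟨y, rfl⟩ := hx
  exact ⟨phiOP R ℓ m hm (K + 1) y, dOP_phiOP hm y⟩

noncomputable def phiH : OPH R (ℓ - m) m K →ₗ[R] OPH R ℓ m (K + 2) :=
  Submodule.mapQ _ _ ((phiOP R ℓ m hm K).restrict fun _ hx => phiOP_mem_ker hm hx)
    fun _ hx => phiOP_mem_range hm hx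

lemma phiH_mk (z : LinearMap.ker (dOPOut R (ℓ - m) m K)) :
    phiH hm (Submodule.Quotient.mk z)
      = Submodule.Quotient.mk ⟨phiOP R ℓ m hm K z, phiOP_mem_ker hm z.2⟩ :=
  rfl

variable (hℓ : 2 ≤ ℓ)
include hℓ

lemma exists_cycle_phiOP_eq {w : OPMod R ℓ m (K + 2)} (hw : dOP R ℓ m (K + 1) w = 0) :
    ∃ y ∈ LinearMap.ker (dOPOut R (ℓ - m) m K),
      phiOP R ℓ m hm K y = w + dOP R ℓ m (K + 2) (hOP R ℓ m (K + 2) w) := by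
  obtain ⟨z, hz⟩ := exists_homotopy_eq_rL_prependL hℓ w
  rw [hw, map_zero, add_zero, rL_prependL hm] at hz
  refine ⟨_, ?_, hz.symm⟩
  cases K with
  | zero => rfl
  | succ J =>
    refine phiOP_injective hm ?_
    change phiOP R ℓ m hm J (dOP R (ℓ - m) m J _) = phiOP R ℓ m hm J 0
    rw [← dOP_phiOP, ← hz, map_add, hw, dOP_dOP, add_zero, map_zero]

lemma mem_range_of_phiOP_mem_range {y : OPMod R (ℓ - m) m K}
    (h : phiOP R ℓ m hm K y ∈ LinearMap.range (dOP R ℓ m (K + 2))) :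
    y ∈ LinearMap.range (dOP R (ℓ - m) m K) := by
  obtain ⟨w, hw⟩ := h
  obtain ⟨z, hz⟩ := exists_homotopy_eq_rL_prependL hℓ w
  rw [hw, hOP_phiOP, add_zero, rL_prependL hm] at hz
  have hd := congrArg (dOP R ℓ m (K + 2)) hz
  rw [map_add, dOP_dOP, add_zero, hw, dOP_phiOP] at hd
  exact ⟨_, (phiOP_injective hm hd).symm⟩

lemma phiH_bijective : Function.Bijective (phiH (R := R) (ℓ := ℓ) (K := K) hm) := by
  constructor
  · refine (injective_iff_map_eq_zero _).mpr fun c hc => ?_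
    obtain ⟨y, rfl⟩ := Submodule.Quotient.mk_surjective _ c
    rw [phiH_mk, Submodule.Quotient.mk_eq_zero, Submodule.mem_comap] at hc
    rw [Submodule.Quotient.mk_eq_zero, Submodule.mem_comap]
    exact mem_range_of_phiOP_mem_range hm hℓ hc
  · intro c
    obtain ⟨w, rfl⟩ := Submodule.Quotient.mk_surjective _ c
    obtain ⟨y, hy, hyw⟩ := exists_cycle_phiOP_eq hm hℓ (LinearMap.mem_ker.mp w.2)
    refine ⟨Submodule.Quotient.mk ⟨y, hy⟩, ?_⟩
    rw [phiH_mk, Submodule.Quotient.eq, Submodule.mem_comap]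
    refine ⟨hOP R ℓ m (K + 2) w, ?_⟩
    change _ = phiOP R ℓ m hm K y - w
    rw [hyw, add_sub_cancel_left]
    rfl

end Homology

section Computation

variable {R : Type} [CommRing R] {ℓ : ℤ} {m k : ℕ}

lemma isEmpty_OPb_of_lt (h : ℓ < k) : IsEmpty (OPb ℓ m k) :=
  ⟨fun b => absurd (length_le_of_mem_OPSet b.2) (not_le.mpr h)⟩

lemma isEmpty_OPb_zero (h : ℓ ≠ 0) : IsEmpty (OPb ℓ m 0) :=
  ⟨fun b => h (nil_mem_OPSet_iff.mp (List.eq_nil_of_length_eq_zero b.2.1 ▸ b.2)).2⟩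

lemma OPH_one_subsingleton (hℓ : 2 ≤ ℓ) : Subsingleton (OPH R ℓ m 1) := by
  refine subsingleton_of_forall_eq 0 fun c => ?_
  obtain ⟨w, rfl⟩ := Submodule.Quotient.mk_surjective _ c
  obtain ⟨z, hz⟩ := exists_homotopy_eq_rL_prependL hℓ (w : OPMod R ℓ m 1)
  rw [show dOP R ℓ m 0 w = 0 from w.2, map_zero, add_zero, rL_prependL_of_le_one le_rfl] at hz
  rw [Submodule.Quotient.mk_eq_zero, Submodule.mem_comap]
  exact ⟨-hOP R ℓ m 1 w, by rw [map_neg]; exact neg_eq_of_add_eq_zero_left hz⟩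

lemma OPH_subsingleton (hm : 2 ≤ m) (k : ℕ) (ℓ : ℤ)
    (h : ¬((∃ i : ℕ, k = 2 * i ∧ ℓ = (m : ℤ) * i) ∨
      (∃ i : ℕ, k = 2 * i + 1 ∧ ℓ = (m : ℤ) * i + 1))) :
    Subsingleton (OPH R ℓ m k) := by
  induction k using Nat.strong_induction_on generalizing ℓ with
  | _ k ih =>
    by_cases hlt : ℓ < k
    · have := isEmpty_OPb_of_lt (m := m) hlt
      infer_instance
    match k with
    | 0 =>
      have := isEmpty_OPb_zero (m := m) (ℓ := ℓ) fun h0 => h (.inl ⟨0, rfl, by simp [h0]⟩)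
      infer_instance
    | 1 =>
      refine OPH_one_subsingleton (by_contra fun h2 => h (.inr ⟨0, rfl, ?_⟩))
      push_cast at hlt
      omega
    | K + 2 =>
      have := ih K (by omega) (ℓ - m) fun hs => h (by
        rcases hs with ⟨i, rfl, hi⟩ | ⟨i, rfl, hi⟩
        · exact .inl ⟨i + 1, by ring, by push_cast; linarith⟩
        · exact .inr ⟨i + 1, by ring, by push_cast; linarith⟩)
      exact (phiH_bijective hm (by push_cast at hlt; omega)).2.subsingleton

def SpansHomologyFreely (R : Type) [CommRing R] (b : OPb ℓ m k) : Prop :=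
  ∃ z : LinearMap.ker (dOPOut R ℓ m k), (z : OPMod R ℓ m k) = single b 1 ∧
    Function.Bijective (LinearMap.toSpanSingleton R (OPH R ℓ m k) (Submodule.Quotient.mk z))

lemma spansHomologyFreely_of_unique {b : OPb ℓ m k} (hb : ∀ b', b' = b)
    (hd : dOPOut R ℓ m k (single b 1) = 0) [IsEmpty (OPb ℓ m (k + 1))] :
    SpansHomologyFreely R b := by
  refine ⟨⟨single b 1, hd⟩, rfl, ?_, fun c => ?_⟩
  · refine (injective_iff_map_eq_zero _).mpr fun r hr => ?_
    rw [LinearMap.toSpanSingleton_apply, ← Submodule.Quotient.mk_smul,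
      Submodule.Quotient.mk_eq_zero, Submodule.mem_comap] at hr
    obtain ⟨x, hx⟩ := hr
    rw [Subsingleton.elim x 0, map_zero] at hx
    simpa using (DFunLike.congr_fun hx b).symm
  · obtain ⟨w, rfl⟩ := Submodule.Quotient.mk_surjective _ c
    refine ⟨(w : OPMod R ℓ m k) b, ?_⟩
    rw [LinearMap.toSpanSingleton_apply, ← Submodule.Quotient.mk_smul]
    congr 1
    ext b'
    simp [hb b']

lemma SpansHomologyFreely.prepend (hm : 2 ≤ m) (hℓ : 2 ≤ ℓ) {b : OPb (ℓ - m) m k}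
    (h : SpansHomologyFreely R b) :
    SpansHomologyFreely R (⟨1 :: (m - 1) :: b.1, (cons_cons_mem_OPSet_iff hm).mpr b.2⟩ :
      OPb ℓ m (k + 2)) := by
  obtain ⟨z, hz, hbij⟩ := h
  refine ⟨⟨phiOP R ℓ m hm k z, phiOP_mem_ker hm z.2⟩, by simp [hz, phiOP_single], ?_⟩
  rw [← phiH_mk, ← LinearMap.comp_toSpanSingleton]
  exact (phiH_bijective hm hℓ).comp hbij

lemma exists_spansHomologyFreely_altL (hm : 2 ≤ m) (i k : ℕ) (ℓ : ℤ) (hk : k = 2 * i)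
    (hℓ : ℓ = (m : ℤ) * i) : ∃ b : OPb ℓ m k, b.1 = altL m i ∧ SpansHomologyFreely R b := by
  induction i generalizing k ℓ with
  | zero =>
    subst hk hℓ
    have := isEmpty_OPb_of_lt (ℓ := (m : ℤ) * (0 : ℕ)) (m := m) (k := 0 + 1) (by simp)
    exact ⟨⟨[], by simp⟩, rfl, spansHomologyFreely_of_unique
      (fun b' => Subtype.ext (List.eq_nil_of_length_eq_zero b'.2.1)) rfl⟩
  | succ i ih =>
    obtain rfl : k = 2 * i + 2 := by omega
    obtain ⟨b, hb, hfree⟩ := ih (2 * i) (ℓ - m) rfl (by rw [hℓ]; push_cast; ring)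
    exact ⟨_, by simp [altL, hb], hfree.prepend hm (by rw [hℓ]; push_cast; nlinarith)⟩

lemma exists_spansHomologyFreely_altL_append_one (hm : 2 ≤ m) (i k : ℕ) (ℓ : ℤ)
    (hk : k = 2 * i + 1) (hℓ : ℓ = (m : ℤ) * i + 1) :
    ∃ b : OPb ℓ m k, b.1 = altL m i ++ [1] ∧ SpansHomologyFreely R b := by
  induction i generalizing k ℓ with
  | zero =>
    subst hk hℓ
    have := isEmpty_OPb_of_lt (ℓ := (m : ℤ) * (0 : ℕ) + 1) (m := m) (k := 0 + 1 + 1) (by simp)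
    have : IsEmpty (OPb ((m : ℤ) * (0 : ℕ) + 1) m 0) := isEmpty_OPb_zero (by simp)
    refine ⟨⟨[1], by simp; omega⟩, rfl, spansHomologyFreely_of_unique (fun b' => ?_)
      (Subsingleton.elim _ _)⟩
    obtain ⟨l, hlen, hsum, -⟩ := b'
    obtain ⟨a, rfl⟩ := List.length_eq_one_iff.mp hlen
    have ha : a = 1 := by simpa using hsum
    exact Subtype.ext (by simp [ha])
  | succ i ih =>
    obtain rfl : k = 2 * i + 1 + 2 := by omega
    obtain ⟨b, hb, hfree⟩ := ih (2 * i + 1) (ℓ - m) rfl (by rw [hℓ]; push_cast; ring)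
    exact ⟨_, by simp [altL, hb], hfree.prepend hm (by rw [hℓ]; push_cast; nlinarith)⟩

end Computation

/-- for `m ≥ 2`, the homology `H_k(OP(ℓ,m))` vanishes unless
`(k,ℓ) = (2i, mi)` or `(k,ℓ) = (2i+1, mi+1)` for some `i ≥ 0`, in which cases it is free
of rank 1, generated by the class of `(1,m-1,...,1,m-1)` (with `2i` entries), resp.
`(1,m-1,...,1,m-1,1)` (with `2i+1` entries). -/
theorem OPH_computation (R : Type) [CommRing R] (m : ℕ) (hm : 2 ≤ m) (k : ℕ) (ℓ : ℤ) :
    (¬((∃ i : ℕ, k = 2 * i ∧ ℓ = (m : ℤ) * i) ∨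
        (∃ i : ℕ, k = 2 * i + 1 ∧ ℓ = (m : ℤ) * i + 1)) →
      ∀ c : OPH R ℓ m k, c = 0) ∧
    (∀ i : ℕ, k = 2 * i → ℓ = (m : ℤ) * i →
      ∃ (b : OPb ℓ m k) (z : LinearMap.ker (dOPOut R ℓ m k)),
        b.1 = altL m i ∧ (z : OPMod R ℓ m k) = Finsupp.single b 1 ∧
        (∀ y : OPH R ℓ m k, ∃ r : R, y = r • (Submodule.Quotient.mk z : OPH R ℓ m k)) ∧
        (∀ r : R, r • (Submodule.Quotient.mk z : OPH R ℓ m k) = 0 → r = 0)) ∧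
    (∀ i : ℕ, k = 2 * i + 1 → ℓ = (m : ℤ) * i + 1 →
      ∃ (b : OPb ℓ m k) (z : LinearMap.ker (dOPOut R ℓ m k)),
        b.1 = altL m i ++ [1] ∧ (z : OPMod R ℓ m k) = Finsupp.single b 1 ∧
        (∀ y : OPH R ℓ m k, ∃ r : R, y = r • (Submodule.Quotient.mk z : OPH R ℓ m k)) ∧
        (∀ r : R, r • (Submodule.Quotient.mk z : OPH R ℓ m k) = 0 → r = 0)) := by
  refine ⟨fun h c => (OPH_subsingleton hm k ℓ h).elim c 0, fun i hk hℓ => ?_, fun i hk hℓ => ?_⟩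
  · obtain ⟨b, hb, z, hz, hbij⟩ := exists_spansHomologyFreely_altL (R := R) hm i k ℓ hk hℓ
    exact ⟨b, z, hb, hz, LinearMap.bijective_toSpanSingleton_iff.mp hbij⟩
  · obtain ⟨b, hb, z, hz, hbij⟩ :=
      exists_spansHomologyFreely_altL_append_one (R := R) hm i k ℓ hk hℓ
    exact ⟨b, z, hb, hz, LinearMap.bijective_toSpanSingleton_iff.mp hbij⟩
end

section
/- With CX the cone on a directed graph X as above (quotient of X □ I collapsing X □ {+1} to a vertex +1), the graph CX is 1-contractible: writing d: CX → CX for the map fixing +1 and sending (x,j) to (x, max{j,0}), there exist 1-homotopies from the identity of CX to d and from the constant map at +1 to d; hence the identity and the constant map at +1 are connected by a zig-zag of 1-homotopies. -/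
open scoped Classical

/-- A directed graph on a vertex type `V` (loops allowed, no parallel edges). -/
structure DGraph (V : Type) where
  Adj : V → V → Prop

namespace DGraph
variable {V W : Type}

/-- There is a directed path of length `n` (i.e. with `n` edges) from `x` to `y`. -/
def PathLen (G : DGraph V) (x y : V) (n : ℕ) : Prop :=
  ∃ f : ℕ → V, f 0 = x ∧ f n = y ∧ ∀ i < n, G.Adj (f i) (f (i + 1))

/-- The shortest path metric, with values in `ℕ∞ = ℕ ∪ {∞}`. -/
noncomputable def edist (G : DGraph V) (x y : V) : ℕ∞ :=
  sInf {n : ℕ∞ | ∃ m : ℕ, n = m ∧ G.PathLen x y m}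

/-- The length of a tuple of vertices: the sum of consecutive distances. -/
noncomputable def tlen (G : DGraph V) {k : ℕ} (f : Fin (k + 1) → V) : ℕ∞ :=
  ∑ i : Fin k, G.edist (f i.castSucc) (f i.succ)

/-- The box product of directed graphs. -/
def box (G : DGraph V) (H : DGraph W) : DGraph (V × W) where
  Adj p q := (p.1 = q.1 ∧ H.Adj p.2 q.2) ∨ (p.2 = q.2 ∧ G.Adj p.1 q.1)

/-- The strong product of directed graphs. -/
def strong (G : DGraph V) (H : DGraph W) : DGraph (V × W) where
  Adj p q := (p.1 = q.1 ∧ H.Adj p.2 q.2) ∨ (p.2 = q.2 ∧ G.Adj p.1 q.1) ∨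
    (G.Adj p.1 q.1 ∧ H.Adj p.2 q.2)

end DGraph

namespace DGraph
variable {V : Type}

/-- The cone `CX` on a directed graph `X`: the quotient of the box product `X □ I`
(where `I` is `−1 → 0 ← +1`) collapsing `X □ {+1}` to a single vertex.  Vertices:
`some (x, false)` is `(x, −1)`, `some (x, true)` is `(x, 0)`, and `none` is the cone
point `+1`. -/
def Cone (G : DGraph V) : DGraph (Option (V × Bool)) where
  Adj u v :=
    match u, v with
    | some (x, b₁), some (y, b₂) =>
        (b₁ = b₂ ∧ G.Adj x y) ∨ (b₁ = false ∧ b₂ = true ∧ x = y)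
    | none, some (_, b₂) => b₂ = true
    | none, none => ∃ x y : V, G.Adj x y
    | some _, none => False

end DGraph

/-- A map of directed graphs: each edge is sent to an edge or collapsed to a vertex. -/
def IsGraphMap {V W : Type} (G : DGraph V) (H : DGraph W) (f : V → W) : Prop :=
  ∀ x y : V, G.Adj x y → f x = f y ∨ H.Adj (f x) (f y)

/-- There is a `1`-homotopy from `f` to `g`: for every vertex `x`, `d(f x, g x) ≤ 1`,
i.e. `f x = g x` or there is an edge `f x → g x`. -/
def OneHomotopy {V W : Type} (H : DGraph W) (f g : V → W) : Prop :=
  ∀ x : V, f x = g x ∨ H.Adj (f x) (g x)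

/-- The map `d : CX → CX` fixing the cone point and sending `(x,j)` to `(x, max j 0)`,
i.e. `(x,−1) ↦ (x,0)` and `(x,0) ↦ (x,0)`. -/
def coneD {V : Type} : Option (V × Bool) → Option (V × Bool) :=
  fun w => match w with
    | none => none
    | some (x, _) => some (x, true)

/-- the cone `CX` is `1`-contractible: `coneD` is a map of directed
graphs, as is the constant map at the cone point, and there are `1`-homotopies from the
identity to `coneD` and from the constant map to `coneD`; hence the identity and the
constant map at the cone point are connected by a zig-zag of `1`-homotopies. -/
theorem cone_one_contractible {V : Type} (G : DGraph V) :
    IsGraphMap (G.Cone) (G.Cone) coneD ∧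
    IsGraphMap (G.Cone) (G.Cone) (fun _ => (none : Option (V × Bool))) ∧
    IsGraphMap (G.Cone) (G.Cone) id ∧
    OneHomotopy (G.Cone) id coneD ∧
    OneHomotopy (G.Cone) (fun _ => (none : Option (V × Bool))) coneD := by
  refine ⟨?_, ?_, ?_, ?_, ?_⟩
  · rintro (_ | ⟨x, b₁⟩) (_ | ⟨y, b₂⟩) h <;> simp [coneD, DGraph.Cone] at h ⊢
    tauto
  · intro x y _; exact Or.inl rfl
  · intro x y h; exact Or.inr h
  · rintro (_ | ⟨x, b⟩)
    · exact Or.inl rfl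
    · cases b
      · exact Or.inr (Or.inr ⟨rfl, rfl, rfl⟩)
      · exact Or.inl rfl
  · rintro (_ | ⟨x, b⟩)
    · exact Or.inl rfl
    · exact Or.inr rfl
end
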